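/- arXiv:1301.3269 — 11 statements merged into one kernel-verified Lean document; each statement's English description precedes it below -/
import Mathlib

section
/- Let e > 0 be real and define sequences (a_ℓ), (b_ℓ) by b₀ = e - 6, a₀ = 2e + 6, b_{ℓ+1} = -b_ℓ²/a_ℓ, a_{ℓ+1} = 2a_ℓ + b_{ℓ+1}, and set r_ℓ = b_ℓ/a_ℓ. Then -1 < r₀ < 1/2, and -1 < r_ℓ ≤ 0 for every ℓ ≥ 1. -/
/-- Bounds on r_ℓ = b_ℓ/a_ℓ for the coupled sequences b₀ = e - 6, a₀ = 2e + 6,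
b_{ℓ+1} = -b_ℓ²/a_ℓ, a_{ℓ+1} = 2a_ℓ + b_{ℓ+1}: we have -1 < r₀ < 1/2 and
-1 < r_ℓ ≤ 0 for all ℓ ≥ 1. -/
theorem seq_r_bounds (e : ℝ) (he : 0 < e) (a b r : ℕ → ℝ)
    (hb0 : b 0 = e - 6) (ha0 : a 0 = 2*e + 6)
    (hb : ∀ ℓ, b (ℓ+1) = -((b ℓ)^2) / a ℓ)
    (ha : ∀ ℓ, a (ℓ+1) = 2 * a ℓ + b (ℓ+1))
    (hr : ∀ ℓ, r ℓ = b ℓ / a ℓ) :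
    (-1 < r 0 ∧ r 0 < 1/2) ∧ ∀ ℓ, 1 ≤ ℓ → (-1 < r ℓ ∧ r ℓ ≤ 0) := by
  have key : ∀ ℓ, 0 < a ℓ ∧ -a ℓ < b ℓ ∧ b ℓ < a ℓ := by
    intro ℓ
    induction ℓ with
    | zero => refine ⟨by rw [ha0]; linarith, by rw [ha0, hb0]; linarith,
        by rw [ha0, hb0]; linarith⟩
    | succ n ih =>
      obtain ⟨hapos, hlo, hhi⟩ := ih
      have hbn1 : b (n+1) = -((b n)^2) / a n := hb n
      have hb1le : b (n+1) ≤ 0 := by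
        rw [hbn1]; exact div_nonpos_of_nonpos_of_nonneg (neg_nonpos.mpr (sq_nonneg _)) hapos.le
      have hb1gt : -a n < b (n+1) := by
        rw [hbn1, neg_div, lt_neg, neg_neg, div_lt_iff₀ hapos]; nlinarith
      have han1 : 0 < a (n+1) := by rw [ha n]; linarith
      refine ⟨han1, ?_, by rw [ha n]; linarith⟩
      rw [ha n]; linarith
  constructor
  · rw [hr 0, hb0, ha0]
    have hp : (0:ℝ) < 2*e + 6 := by linarith
    constructor
    · rw [lt_div_iff₀ hp]; linarith
    · rw [div_lt_iff₀ hp]; linarith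
  · intro ℓ hℓ
    obtain ⟨n, rfl⟩ := Nat.exists_eq_add_of_le hℓ
    obtain ⟨hapos, hlo, _⟩ := key (1 + n)
    have heq : 1 + n = n + 1 := by ring
    rw [hr]
    constructor
    · rw [lt_div_iff₀ hapos]; linarith
    · apply div_nonpos_of_nonpos_of_nonneg _ hapos.le
      rw [heq, hb]
      obtain ⟨hap, _, _⟩ := key n
      exact div_nonpos_of_nonpos_of_nonneg (neg_nonpos.mpr (sq_nonneg _)) hap.le
end

section
/- Let e > 0 be real and define sequences (a_ℓ), (b_ℓ) by b₀ = e - 6, a₀ = 2e + 6, b_{ℓ+1} = -b_ℓ²/a_ℓ, a_{ℓ+1} = 2a_ℓ + b_{ℓ+1}. Then a₀ > 6 and the sequence (a_ℓ) is strictly increasing; in particular a_ℓ > 6 for every ℓ ≥ 0. -/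
/-- For the coupled sequences b₀ = e - 6, a₀ = 2e + 6, b_{ℓ+1} = -b_ℓ²/a_ℓ,
a_{ℓ+1} = 2a_ℓ + b_{ℓ+1} with e > 0: a₀ > 6, the sequence (a_ℓ) is strictly
increasing, and a_ℓ > 6 for every ℓ. -/
theorem seq_a_increasing (e : ℝ) (he : 0 < e) (a b : ℕ → ℝ)
    (hb0 : b 0 = e - 6) (ha0 : a 0 = 2*e + 6)
    (hb : ∀ ℓ, b (ℓ+1) = -((b ℓ)^2) / a ℓ)
    (ha : ∀ ℓ, a (ℓ+1) = 2 * a ℓ + b (ℓ+1)) :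
    6 < a 0 ∧ StrictMono a ∧ ∀ ℓ, 6 < a ℓ := by
  have key : ∀ ℓ, |b ℓ| < a ℓ ∧ 6 < a ℓ := by
    intro ℓ
    induction ℓ with
    | zero =>
      rw [hb0, ha0]
      constructor
      · rw [abs_lt]; constructor <;> nlinarith
      · linarith
    | succ n ih =>
      obtain ⟨h1, h2⟩ := ih
      have hapos : 0 < a n := by linarith
      have hb2 : (b n)^2 < (a n)^2 := by
        have := sq_abs (b n)
        nlinarith [abs_nonneg (b n)]
      have hbn1 : b (n+1) = -((b n)^2) / a n := hb n
      have habs : |b (n+1)| = (b n)^2 / a n := by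
        rw [hbn1, neg_div, abs_neg, abs_div, abs_of_nonneg (sq_nonneg _),
          abs_of_pos hapos]
      have hlt : (b n)^2 / a n < a n := by
        rw [div_lt_iff₀ hapos]; nlinarith
      have han1 : a (n+1) = 2 * a n - (b n)^2 / a n := by
        rw [ha n, hbn1]; ring
      constructor
      · rw [habs, han1]
        linarith
      · rw [han1]; linarith
  have hmono : StrictMono a := by
    apply strictMono_nat_of_lt_succ
    intro n
    obtain ⟨h1, h2⟩ := key n
    have hapos : 0 < a n := by linarith
    have hb2 : (b n)^2 < (a n)^2 := by
      nlinarith [abs_nonneg (b n), sq_abs (b n)]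
    have hlt : (b n)^2 / a n < a n := by
      rw [div_lt_iff₀ hapos]; nlinarith
    have han1 : a (n+1) = 2 * a n - (b n)^2 / a n := by
      rw [ha n, hb n]; ring
    rw [han1]; linarith
  exact ⟨(key 0).2, hmono, fun ℓ => (key ℓ).2⟩
end

section
/- Let e > 0 be real and define sequences (a_ℓ), (b_ℓ) by b₀ = e - 6, a₀ = 2e + 6, b_{ℓ+1} = -b_ℓ²/a_ℓ, a_{ℓ+1} = 2a_ℓ + b_{ℓ+1}, and set r_ℓ = b_ℓ/a_ℓ. Then 0 ≤ r_{ℓ+1}² ≤ r_ℓ² for every ℓ ≥ 0, and r_ℓ² ≤ r₀² < 1 for every ℓ ≥ 0. -/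
/-!
With `r = b / a`, the recurrence gives `a_{ℓ+1} = a_ℓ (2 - r_ℓ²)` and
`r_{ℓ+1} = -r_ℓ² / (2 - r_ℓ²)`. On `r² ≤ 1` the map `r ↦ -r² / (2 - r²)` does not increase
`r²`, since `2 - r² ≥ 1`; so `r_ℓ² < 1` and `a_ℓ > 0` propagate from `ℓ = 0`, where
`(2e + 6)² - (e - 6)² = 3e (e + 12) > 0`.
-/

lemma neg_sq_div_div_two_mul_add_eq {a b : ℝ} (ha : a ≠ 0) :
    (-(b ^ 2) / a) / (2 * a + -(b ^ 2) / a) = -(b / a) ^ 2 / (2 - (b / a) ^ 2) := by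
  have hden : 2 * a + -(b ^ 2) / a = a * (2 - (b / a) ^ 2) := by
    field_simp
    ring
  rw [hden, ← div_div, div_pow]
  congr 1
  field_simp

lemma neg_sq_div_two_sub_sq_sq_le {r : ℝ} (hr : r ^ 2 ≤ 1) :
    (-r ^ 2 / (2 - r ^ 2)) ^ 2 ≤ r ^ 2 := by
  have hden : 1 ≤ 2 - r ^ 2 := by linarith
  have hq : r ^ 2 / (2 - r ^ 2) ≤ r ^ 2 :=
    div_le_self (sq_nonneg r) hden
  calc (-r ^ 2 / (2 - r ^ 2)) ^ 2 = (r ^ 2 / (2 - r ^ 2)) ^ 2 := by rw [neg_div, neg_sq]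
    _ ≤ (r ^ 2) ^ 2 := pow_le_pow_left₀ (by positivity) hq 2
    _ ≤ r ^ 2 := pow_le_of_le_one (sq_nonneg r) hr two_ne_zero

section Recurrence

variable {a b r : ℕ → ℝ}
  (hb : ∀ ℓ, b (ℓ + 1) = -((b ℓ) ^ 2) / a ℓ)
  (ha : ∀ ℓ, a (ℓ + 1) = 2 * a ℓ + b (ℓ + 1))
  (hr : ∀ ℓ, r ℓ = b ℓ / a ℓ)
include hb ha hr

lemma ratio_succ {ℓ : ℕ} (hℓ : a ℓ ≠ 0) : r (ℓ + 1) = -(r ℓ) ^ 2 / (2 - (r ℓ) ^ 2) := by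
  rw [hr, ha, hb, hr]
  exact neg_sq_div_div_two_mul_add_eq hℓ

lemma pos_and_ratio_sq_lt_one (h0 : 0 < a 0 ∧ r 0 ^ 2 < 1) :
    ∀ ℓ, 0 < a ℓ ∧ r ℓ ^ 2 < 1 := by
  intro ℓ
  induction ℓ with
  | zero => exact h0
  | succ ℓ ih =>
    obtain ⟨hpos, hlt⟩ := ih
    have hsucc : a (ℓ + 1) = a ℓ * (2 - r ℓ ^ 2) := by
      rw [ha, hb, hr]
      field_simp
      ring
    refine ⟨hsucc ▸ mul_pos hpos (by linarith), ?_⟩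
    rw [ratio_succ hb ha hr hpos.ne']
    exact (neg_sq_div_two_sub_sq_sq_le hlt.le).trans_lt hlt

end Recurrence

/-- For the coupled sequences b₀ = e - 6, a₀ = 2e + 6, b_{ℓ+1} = -b_ℓ²/a_ℓ,
a_{ℓ+1} = 2a_ℓ + b_{ℓ+1} with r_ℓ = b_ℓ/a_ℓ: the squares r_ℓ² decrease
monotonically, and r_ℓ² ≤ r₀² < 1 for all ℓ. -/
theorem seq_r_sq_decreasing (e : ℝ) (he : 0 < e) (a b r : ℕ → ℝ)
    (hb0 : b 0 = e - 6) (ha0 : a 0 = 2*e + 6)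
    (hb : ∀ ℓ, b (ℓ+1) = -((b ℓ)^2) / a ℓ)
    (ha : ∀ ℓ, a (ℓ+1) = 2 * a ℓ + b (ℓ+1))
    (hr : ∀ ℓ, r ℓ = b ℓ / a ℓ) :
    (∀ ℓ, 0 ≤ (r (ℓ+1))^2 ∧ (r (ℓ+1))^2 ≤ (r ℓ)^2) ∧
    (∀ ℓ, (r ℓ)^2 ≤ (r 0)^2) ∧ (r 0)^2 < 1 := by
  have ha0_pos : 0 < a 0 := by rw [ha0]; linarith
  have hr0 : r 0 ^ 2 < 1 := by
    rw [hr, div_pow, div_lt_one (by positivity), hb0, ha0]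
    nlinarith
  have hinv := pos_and_ratio_sq_lt_one hb ha hr ⟨ha0_pos, hr0⟩
  have hstep : ∀ ℓ, r (ℓ + 1) ^ 2 ≤ r ℓ ^ 2 := fun ℓ => by
    rw [ratio_succ hb ha hr (hinv ℓ).1.ne']
    exact neg_sq_div_two_sub_sq_sq_le (hinv ℓ).2.le
  have hanti : Antitone fun ℓ => r ℓ ^ 2 := antitone_nat_of_succ_le hstep
  exact ⟨fun ℓ => ⟨sq_nonneg _, hstep ℓ⟩, fun ℓ => hanti (Nat.zero_le ℓ), hr0⟩
end

section
/- Let e > 0 be real and define sequences (a_ℓ), (b_ℓ) by b₀ = e - 6, a₀ = 2e + 6, b_{ℓ+1} = -b_ℓ²/a_ℓ, a_{ℓ+1} = 2a_ℓ + b_{ℓ+1}, and set r_ℓ = b_ℓ/a_ℓ. Then for every ℓ ≥ 0 the inequality a_{ℓ+1}² - 36 > 96(1 - r_ℓ²) holds. -/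
/-!
Writing `K_ℓ = a_ℓ² - b_ℓ²`, the recursion becomes `a_{ℓ+1} = a_ℓ + K_ℓ / a_ℓ`, `K_{ℓ+1} = 4 K_ℓ`,
and the claim reads `(a_ℓ² + K_ℓ)² - 36 a_ℓ² - 96 K_ℓ > 0`. This quartic is positive as soon as
`a_ℓ² ≥ 48`; below that threshold it is positive provided `K_ℓ` is not too large compared with
`a_ℓ`, namely `4 K_ℓ ≤ 3 (a_ℓ - 6)(a_ℓ + 18)`. That bound holds with equality at `ℓ = 0` and is
propagated by the recursion for as long as `a_ℓ² < 48`.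
-/

/-- The invariant carried by the pairs `(a_ℓ, a_ℓ² - b_ℓ²)`. -/
def KeyInvariant (A K : ℝ) : Prop :=
  6 < A ∧ 0 < K ∧ (A ^ 2 < 48 → 4 * K ≤ 3 * A ^ 2 + 36 * A - 324)

namespace KeyInvariant

variable {A K : ℝ}

lemma ne_zero (h : KeyInvariant A K) : A ≠ 0 := by
  linarith [h.1]

/- As a function of `K` the quartic is a convex parabola with vertex at `K = 48 - A²`, where it
takes the value `60 A² - 2304`. If that is not positive, the bound on `K` puts `K` left of the
vertex, and the value at the bound is `(A - 6)² (49 A² + 1092 A + 6372) / 16`. -/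
lemma quartic_pos (h : KeyInvariant A K) : 0 < (A ^ 2 + K) ^ 2 - 36 * A ^ 2 - 96 * K := by
  obtain ⟨hA, hK, hbound⟩ := h
  rcases le_or_gt 48 (A ^ 2) with h48 | h48
  · nlinarith [mul_nonneg hK.le (sub_nonneg.2 h48), sq_nonneg K,
      mul_pos (show (0 : ℝ) < A ^ 2 by positivity) (show (0 : ℝ) < A ^ 2 - 36 by nlinarith)]
  have hM := hbound h48
  rcases le_or_gt 516 (7 * A ^ 2 + 36 * A) with hvertex | hleft
  · have : 192 < 5 * A ^ 2 := by nlinarith [sq_nonneg (15 * A - 103)]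
    nlinarith [sq_nonneg (A ^ 2 + K - 48)]
  · have hmono : 0 ≤ (3 * A ^ 2 + 36 * A - 324 - 4 * K) *
        (384 - 4 * K - (3 * A ^ 2 + 36 * A - 324) - 8 * A ^ 2) := by
      apply mul_nonneg <;> linarith
    have hval : 0 < (A - 6) ^ 2 * (49 * A ^ 2 + 1092 * A + 6372) :=
      mul_pos (pow_pos (by linarith) 2) (by nlinarith)
    nlinarith

lemma key_ineq (h : KeyInvariant A K) : 96 * (K / A ^ 2) < (A + K / A) ^ 2 - 36 := by
  have hA2 : 0 < A ^ 2 := pow_pos (by linarith [h.1]) 2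
  have hform : (A + K / A) ^ 2 - 36 - 96 * (K / A ^ 2) =
      ((A ^ 2 + K) ^ 2 - 36 * A ^ 2 - 96 * K) / A ^ 2 := by
    field_simp [h.ne_zero]
  linarith [div_pos h.quartic_pos hA2]

lemma bound_step (h : KeyInvariant A K) (h48 : A ^ 2 < 48) :
    16 * K * A ^ 2 ≤ 3 * (A ^ 2 + K) ^ 2 + 36 * A * (A ^ 2 + K) - 324 * A ^ 2 := by
  obtain ⟨hA, hK, hbound⟩ := h
  have hM := hbound h48
  have hA7 : A < 7 := by nlinarith
  have hM_mul : 0 ≤ (3 * A ^ 2 + 36 * A - 324 - 4 * K) * (11 * A ^ 2 - 180 * A + 972) :=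
    mul_nonneg (by linarith) (by nlinarith [sq_nonneg (11 * A - 90)])
  have hA_mul : 0 ≤ 9 * (A - 6) ^ 2 * (A + 18) * (54 - 5 * A) :=
    mul_nonneg (mul_nonneg (by positivity) (by linarith)) (by linarith)
  nlinarith [sq_nonneg (4 * K - (3 * A ^ 2 + 36 * A - 324))]

lemma next (h : KeyInvariant A K) : KeyInvariant (A + K / A) (4 * K) := by
  have hA : 0 < A := by linarith [h.1]
  have hgrow : A < A + K / A := lt_add_of_pos_right A (div_pos h.2.1 hA)
  refine ⟨by linarith [h.1], by linarith [h.2.1], fun h48' => ?_⟩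
  have h48 : A ^ 2 < 48 := by nlinarith
  have hform : 3 * (A + K / A) ^ 2 + 36 * (A + K / A) - 324 - 4 * (4 * K) =
      (3 * (A ^ 2 + K) ^ 2 + 36 * A * (A ^ 2 + K) - 324 * A ^ 2 - 16 * K * A ^ 2) / A ^ 2 := by
    field_simp
    ring
  have := div_nonneg (sub_nonneg.2 (h.bound_step h48)) (sq_nonneg A)
  linarith

end KeyInvariant

lemma keyInvariant_init {e : ℝ} (he : 0 < e) :
    KeyInvariant (2 * e + 6) ((2 * e + 6) ^ 2 - (e - 6) ^ 2) :=
  ⟨by linarith, by nlinarith, fun _ => by nlinarith⟩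

section Recursion

variable {A B : ℝ}

lemma two_mul_add_neg_sq_div (hA : A ≠ 0) :
    2 * A + -B ^ 2 / A = A + (A ^ 2 - B ^ 2) / A := by
  field_simp
  ring

lemma sq_sub_sq_two_mul_add_neg_sq_div (hA : A ≠ 0) :
    (2 * A + -B ^ 2 / A) ^ 2 - (-B ^ 2 / A) ^ 2 = 4 * (A ^ 2 - B ^ 2) := by
  field_simp
  ring

end Recursion

/-- For the coupled sequences b₀ = e - 6, a₀ = 2e + 6, b_{ℓ+1} = -b_ℓ²/a_ℓ,
a_{ℓ+1} = 2a_ℓ + b_{ℓ+1} with r_ℓ = b_ℓ/a_ℓ: the inequality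
a_{ℓ+1}² - 36 > 96(1 - r_ℓ²) holds for every ℓ. -/
theorem seq_key_inequality (e : ℝ) (he : 0 < e) (a b r : ℕ → ℝ)
    (hb0 : b 0 = e - 6) (ha0 : a 0 = 2*e + 6)
    (hb : ∀ ℓ, b (ℓ+1) = -((b ℓ)^2) / a ℓ)
    (ha : ∀ ℓ, a (ℓ+1) = 2 * a ℓ + b (ℓ+1))
    (hr : ∀ ℓ, r ℓ = b ℓ / a ℓ) :
    ∀ ℓ, (a (ℓ+1))^2 - 36 > 96 * (1 - (r ℓ)^2) := by
  have ha_succ : ∀ ℓ, a ℓ ≠ 0 → a (ℓ + 1) = a ℓ + (a ℓ ^ 2 - b ℓ ^ 2) / a ℓ := fun ℓ h => by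
    rw [ha, hb, two_mul_add_neg_sq_div h]
  have hK_succ : ∀ ℓ, a ℓ ≠ 0 →
      a (ℓ + 1) ^ 2 - b (ℓ + 1) ^ 2 = 4 * (a ℓ ^ 2 - b ℓ ^ 2) := fun ℓ h => by
    rw [ha, hb, sq_sub_sq_two_mul_add_neg_sq_div h]
  have inv : ∀ ℓ, KeyInvariant (a ℓ) (a ℓ ^ 2 - b ℓ ^ 2) := by
    intro ℓ
    induction ℓ with
    | zero => rw [ha0, hb0]; exact keyInvariant_init he
    | succ n ih => rw [hK_succ n ih.ne_zero, ha_succ n ih.ne_zero]; exact ih.next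
  intro ℓ
  have hr_sq : 1 - r ℓ ^ 2 = (a ℓ ^ 2 - b ℓ ^ 2) / a ℓ ^ 2 := by
    rw [hr]
    field_simp [(inv ℓ).ne_zero]
  rw [ha_succ ℓ (inv ℓ).ne_zero, hr_sq]
  exact (inv ℓ).key_ineq
end

section
/- Let e > 0 be real and define sequences (a_ℓ), (b_ℓ) by b₀ = e - 6, a₀ = 2e + 6, b_{ℓ+1} = -b_ℓ²/a_ℓ, a_{ℓ+1} = 2a_ℓ + b_{ℓ+1}, and set c_{ℓ,C}² = 36(a_ℓ + b_ℓ)/((a_ℓ² - 36)(a_ℓ - b_ℓ)). Then c_{ℓ,C}² < 3/8 for every ℓ ≥ 0. -/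
/-- For the coupled sequences b₀ = e - 6, a₀ = 2e + 6, b_{ℓ+1} = -b_ℓ²/a_ℓ,
a_{ℓ+1} = 2a_ℓ + b_{ℓ+1}, the quantities
c_{ℓ,C}² = 36(a_ℓ+b_ℓ)/((a_ℓ²-36)(a_ℓ-b_ℓ)) satisfy c_{ℓ,C}² < 3/8 for all ℓ. -/
theorem cC_bound (e : ℝ) (he : 0 < e) (a b c : ℕ → ℝ)
    (hb0 : b 0 = e - 6) (ha0 : a 0 = 2*e + 6)
    (hb : ∀ ℓ, b (ℓ+1) = -((b ℓ)^2) / a ℓ)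
    (ha : ∀ ℓ, a (ℓ+1) = 2 * a ℓ + b (ℓ+1))
    (hc : ∀ ℓ, c ℓ = 36 * (a ℓ + b ℓ) / (((a ℓ)^2 - 36) * (a ℓ - b ℓ))) :
    ∀ ℓ, c ℓ < 3/8 := by
  -- key invariant: s := a+b > 0 and s + 36 ≤ 3*(a-b)
  have key : ∀ ℓ, 0 < a ℓ + b ℓ ∧ a ℓ + b ℓ + 36 ≤ 3 * (a ℓ - b ℓ) := by
    intro ℓ
    induction ℓ with
    | zero =>
      rw [ha0, hb0]
      constructor <;> nlinarith
    | succ n ih =>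
      obtain ⟨hs, ht⟩ := ih
      have hA : 0 < a n := by nlinarith
      have hAne : a n ≠ 0 := ne_of_gt hA
      have hd : 0 < a n - b n := by nlinarith
      have hs' : a (n+1) + b (n+1) = 2 * (a n + b n) * (a n - b n) / a n := by
        rw [ha, hb]; field_simp; ring
      have hd' : a (n+1) - b (n+1) = 2 * a n := by
        rw [ha]; ring
      constructor
      · rw [hs']
        positivity
      · rw [hs', hd']
        rw [div_add' _ _ _ hAne, div_le_iff₀ hA]
        nlinarith [sq_nonneg (a n + b n), sq_nonneg (3*(a n - b n) - (a n + b n) - 36),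
          mul_nonneg (sub_nonneg.2 ht) hs.le]
  intro ℓ
  obtain ⟨hs, ht⟩ := key ℓ
  have hd : 0 < a ℓ - b ℓ := by nlinarith
  have hA6 : 6 < a ℓ := by nlinarith
  have hden : 0 < ((a ℓ)^2 - 36) * (a ℓ - b ℓ) := by
    apply mul_pos _ hd
    nlinarith
  rw [hc, div_lt_iff₀ hden]
  nlinarith [mul_nonneg (mul_nonneg (sub_nonneg.2 ht) (sub_nonneg.2 ht)) (sub_nonneg.2 ht),
    mul_nonneg (mul_nonneg hs.le hs.le) hs.le,
    mul_nonneg (mul_nonneg hs.le hs.le) (sub_nonneg.2 ht),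
    mul_nonneg (mul_nonneg hs.le (sub_nonneg.2 ht)) (sub_nonneg.2 ht),
    mul_nonneg (sub_nonneg.2 ht) (sub_nonneg.2 ht),
    mul_nonneg hs.le (sub_nonneg.2 ht),
    mul_pos hs hs, sub_nonneg.2 ht]
end

section
/- Let e > 0 be real and define sequences (a_ℓ), (b_ℓ) by b₀ = e - 6, a₀ = 2e + 6, b_{ℓ+1} = -b_ℓ²/a_ℓ, a_{ℓ+1} = 2a_ℓ + b_{ℓ+1}, and set c_{ℓ,C}² = 36(a_ℓ + b_ℓ)/((a_ℓ² - 36)(a_ℓ - b_ℓ)). Then the sequence (c_{ℓ,C}²) is strictly decreasing: c_{ℓ+1,C}² < c_{ℓ,C}² for every ℓ ≥ 0. -/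
/-!
One step of the recursion is `(a, b) ↦ (2a - b²/a, -b²/a)`. Over the common numerator
`36 (a² - b²)`,
  `c_ℓ = 36 (a² - b²) / ((a² - 36) (a - b)²)`,  `c_{ℓ+1} = 36 (a² - b²) / ((2a² - b²)² - 36 a²)`,
so the claim reduces to the polynomial inequality `(a² - 36)(a - b)² < (2a² - b²)² - 36 a²`.
It holds on the region `6 < a`, `-a < b < a/2`, `a² + 4ab ≥ -108`, which contains the starting
point `(2e + 6, e - 6)` and is mapped into itself by the step.
-/

noncomputable def cSq (a b : ℝ) : ℝ := 36 * (a + b) / ((a ^ 2 - 36) * (a - b))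

/-- The bound `-108 ≤ a² + 4ab` is attained at the fixed point `(6, -6)` of the step, which is
the limit of the starting point as `e → 0`. -/
structure Admissible (a b : ℝ) : Prop where
  six_lt : 6 < a
  neg_lt : -a < b
  two_mul_lt : 2 * b < a
  neg_108_le : -108 ≤ a ^ 2 + 4 * a * b

namespace Admissible

variable {a b : ℝ}

lemma initial {e : ℝ} (he : 0 < e) : Admissible (2 * e + 6) (e - 6) where
  six_lt := by linarith
  neg_lt := by linarith
  two_mul_lt := by linarith
  neg_108_le := by nlinarith

lemma pos (h : Admissible a b) : 0 < a := by linarith [h.six_lt]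

lemma sub_pos (h : Admissible a b) : 0 < a - b := by linarith [h.six_lt, h.two_mul_lt]

lemma sq_lt_sq (h : Admissible a b) : b ^ 2 < a ^ 2 := by
  nlinarith [h.neg_lt, h.sub_pos]

lemma sq_sub_36_pos (h : Admissible a b) : 0 < a ^ 2 - 36 := by nlinarith [h.six_lt]

lemma step_fst_eq (h : Admissible a b) : 2 * a + -b ^ 2 / a = (2 * a ^ 2 - b ^ 2) / a := by
  field_simp [h.pos.ne']
  ring

lemma neg_108_mul_sq_le (h : Admissible a b) :
    -108 * a ^ 2 ≤ (2 * a ^ 2 - b ^ 2) * (2 * a ^ 2 - 5 * b ^ 2) := by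
  rcases le_or_gt b 0 with hb | hb
  · have key : (2 * a ^ 2 - b ^ 2) * (2 * a ^ 2 - 5 * b ^ 2) + 108 * a ^ 2
        = (a + b) ^ 2 * (3 * a ^ 2 - 10 * a * b + 5 * b ^ 2)
          + a ^ 2 * (a ^ 2 + 4 * a * b + 108) := by ring
    have : 0 ≤ 3 * a ^ 2 - 10 * a * b + 5 * b ^ 2 := by nlinarith [h.pos]
    have : 0 ≤ a ^ 2 * (a ^ 2 + 4 * a * b + 108) :=
      mul_nonneg (sq_nonneg a) (by linarith [h.neg_108_le])
    nlinarith [sq_nonneg (a + b)]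
  · have : 0 ≤ 2 * a ^ 2 - 5 * b ^ 2 := by nlinarith [h.two_mul_lt]
    nlinarith [h.sq_lt_sq]

lemma step (h : Admissible a b) : Admissible (2 * a + -b ^ 2 / a) (-b ^ 2 / a) := by
  have ha := h.pos
  have hsq := h.sq_lt_sq
  rw [h.step_fst_eq]
  refine ⟨?_, ?_, ?_, ?_⟩
  · rw [lt_div_iff₀ ha]; nlinarith [h.six_lt]
  · rw [neg_div, neg_lt_neg_iff, div_lt_div_iff_of_pos_right ha]; linarith
  · rw [← mul_div_assoc, div_lt_div_iff_of_pos_right ha]; nlinarith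
  · have hexp : ((2 * a ^ 2 - b ^ 2) / a) ^ 2 + 4 * ((2 * a ^ 2 - b ^ 2) / a) * (-b ^ 2 / a)
        = (2 * a ^ 2 - b ^ 2) * (2 * a ^ 2 - 5 * b ^ 2) / a ^ 2 := by
      field_simp; ring
    rw [hexp, le_div_iff₀ (by positivity)]
    exact h.neg_108_mul_sq_le

lemma denom_lt_step_denom (h : Admissible a b) :
    (a ^ 2 - 36) * (a - b) ^ 2 < (2 * a ^ 2 - b ^ 2) ^ 2 - 36 * a ^ 2 := by
  have ha := h.pos
  have h2 := h.two_mul_lt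
  rw [← _root_.sub_pos]
  have hK : (2 * a ^ 2 - b ^ 2) ^ 2 - 36 * a ^ 2 - (a ^ 2 - 36) * (a - b) ^ 2
      = (a ^ 2 + a * b - b ^ 2) * (3 * a ^ 2 - a * b - b ^ 2) - 36 * b * (2 * a - b) := by ring
  rw [hK]
  rcases le_or_gt b 0 with hb | hb
  · -- the invariant, multiplied by `-b (2a - b) ≥ 0`, leaves a positive multiple of `(a + b)²`
    have key : 3 * ((a ^ 2 + a * b - b ^ 2) * (3 * a ^ 2 - a * b - b ^ 2) - 36 * b * (2 * a - b))
        = (a + b) ^ 2 * ((5 * a - 3 * b) ^ 2 + 2 * a ^ 2) / 3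
          + -b * (2 * a - b) * (a ^ 2 + 4 * a * b + 108) := by ring
    have : 0 < (a + b) ^ 2 * ((5 * a - 3 * b) ^ 2 + 2 * a ^ 2) / 3 := by
      have : 0 < a + b := by linarith [h.neg_lt]
      positivity
    have : 0 ≤ -b * (2 * a - b) * (a ^ 2 + 4 * a * b + 108) :=
      mul_nonneg (mul_nonneg (by linarith) (by linarith)) (by linarith [h.neg_108_le])
    linarith
  · have hf : 3 * a ^ 2 / 4 ≤ a ^ 2 + a * b - b ^ 2 := by nlinarith
    have hg : 9 * a ^ 2 / 4 ≤ 3 * a ^ 2 - a * b - b ^ 2 := by nlinarith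
    have hr : 36 * b * (2 * a - b) ≤ 36 * a ^ 2 := by nlinarith
    nlinarith [mul_le_mul hf hg (by positivity) (by nlinarith),
      mul_pos (pow_pos ha 2) h.sq_sub_36_pos]

lemma cSq_eq (h : Admissible a b) :
    cSq a b = 36 * (a ^ 2 - b ^ 2) / ((a ^ 2 - 36) * (a - b) ^ 2) := by
  rw [cSq, ← mul_div_mul_right _ _ h.sub_pos.ne']
  ring_nf

lemma cSq_step_eq (h : Admissible a b) :
    cSq (2 * a + -b ^ 2 / a) (-b ^ 2 / a)
      = 36 * (a ^ 2 - b ^ 2) / ((2 * a ^ 2 - b ^ 2) ^ 2 - 36 * a ^ 2) := by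
  have ha := h.pos
  have hD : 0 < (2 * a ^ 2 - b ^ 2) ^ 2 - 36 * a ^ 2 :=
    lt_of_le_of_lt (mul_nonneg h.sq_sub_36_pos.le (sq_nonneg _)) h.denom_lt_step_denom
  have hsum : (2 * a ^ 2 - b ^ 2) / a + -b ^ 2 / a = 2 * (a ^ 2 - b ^ 2) / a := by ring
  have hdiff : (2 * a ^ 2 - b ^ 2) / a - -b ^ 2 / a = 2 * a := by field_simp; ring
  have hsq : ((2 * a ^ 2 - b ^ 2) / a) ^ 2 - 36
      = ((2 * a ^ 2 - b ^ 2) ^ 2 - 36 * a ^ 2) / a ^ 2 := by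
    field_simp
  rw [cSq, h.step_fst_eq, hsum, hdiff, hsq]
  field_simp [hD.ne']

lemma cSq_step_lt (h : Admissible a b) : cSq (2 * a + -b ^ 2 / a) (-b ^ 2 / a) < cSq a b := by
  rw [h.cSq_step_eq, h.cSq_eq]
  have := h.sq_sub_36_pos
  have := h.sub_pos
  have : 0 < a ^ 2 - b ^ 2 := by linarith [h.sq_lt_sq]
  exact div_lt_div_of_pos_left (by positivity) (by positivity) h.denom_lt_step_denom

end Admissible

/-- For the coupled sequences b₀ = e - 6, a₀ = 2e + 6, b_{ℓ+1} = -b_ℓ²/a_ℓ,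
a_{ℓ+1} = 2a_ℓ + b_{ℓ+1}, the sequence
c_{ℓ,C}² = 36(a_ℓ+b_ℓ)/((a_ℓ²-36)(a_ℓ-b_ℓ)) is strictly decreasing. -/
theorem cC_strict_decreasing (e : ℝ) (he : 0 < e) (a b c : ℕ → ℝ)
    (hb0 : b 0 = e - 6) (ha0 : a 0 = 2*e + 6)
    (hb : ∀ ℓ, b (ℓ+1) = -((b ℓ)^2) / a ℓ)
    (ha : ∀ ℓ, a (ℓ+1) = 2 * a ℓ + b (ℓ+1))
    (hc : ∀ ℓ, c ℓ = 36 * (a ℓ + b ℓ) / (((a ℓ)^2 - 36) * (a ℓ - b ℓ))) :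
    ∀ ℓ, c (ℓ+1) < c ℓ := by
  have hadm : ∀ ℓ, Admissible (a ℓ) (b ℓ) := by
    intro ℓ
    induction ℓ with
    | zero => rw [ha0, hb0]; exact Admissible.initial he
    | succ n ih => rw [ha n, hb n]; exact ih.step
  intro ℓ
  have h := (hadm ℓ).cSq_step_lt
  rw [← hb ℓ, ← ha ℓ] at h
  rw [hc, hc]
  exact h
end

section
/- Let e > 0 be real and define sequences (a_ℓ), (b_ℓ) by b₀ = e - 6, a₀ = 2e + 6, b_{ℓ+1} = -b_ℓ²/a_ℓ, a_{ℓ+1} = 2a_ℓ + b_{ℓ+1}, and set c_{ℓ,D}² = 72(a_ℓ + b_ℓ)/((a_ℓ + 12)(a_ℓ - 6)(a_ℓ - b_ℓ)). Then c_{ℓ,D}² < 1/2 for every ℓ ≥ 0. -/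
/-- For the coupled sequences b₀ = e - 6, a₀ = 2e + 6, b_{ℓ+1} = -b_ℓ²/a_ℓ,
a_{ℓ+1} = 2a_ℓ + b_{ℓ+1}, the quantities
c_{ℓ,D}² = 72(a_ℓ+b_ℓ)/((a_ℓ+12)(a_ℓ-6)(a_ℓ-b_ℓ)) satisfy c_{ℓ,D}² < 1/2
for all ℓ. -/
theorem cD_bound (e : ℝ) (he : 0 < e) (a b c : ℕ → ℝ)
    (hb0 : b 0 = e - 6) (ha0 : a 0 = 2*e + 6)
    (hb : ∀ ℓ, b (ℓ+1) = -((b ℓ)^2) / a ℓ)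
    (ha : ∀ ℓ, a (ℓ+1) = 2 * a ℓ + b (ℓ+1))
    (hc : ∀ ℓ, c ℓ = 72 * (a ℓ + b ℓ) / ((a ℓ + 12) * (a ℓ - 6) * (a ℓ - b ℓ))) :
    ∀ ℓ, c ℓ < 1/2 := by
  -- Invariant: 6 < a, 0 < a+b, 0 < a-b, 2(a+b) ≤ 3(a-6)
  have inv : ∀ ℓ, 6 < a ℓ ∧ 0 < a ℓ + b ℓ ∧ 0 < a ℓ - b ℓ ∧
      2 * (a ℓ + b ℓ) ≤ 3 * (a ℓ - 6) := by
    intro ℓ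
    induction ℓ with
    | zero =>
      refine ⟨?_, ?_, ?_, ?_⟩ <;> simp only [ha0, hb0] <;> nlinarith
    | succ n ih =>
      obtain ⟨h6, hu, hv, hI⟩ := ih
      set A := a n with hA
      set B := b n with hB
      have hApos : 0 < A := by linarith
      have hAne : A ≠ 0 := ne_of_gt hApos
      have hbn : b (n+1) = -(B^2) / A := hb n
      have han : a (n+1) = 2 * A + (-(B^2) / A) := by rw [ha n, hbn]
      have hAB : 0 < A^2 - B^2 := by nlinarith
      have hu' : a (n+1) + b (n+1) = 2 * (A^2 - B^2) / A := by
        rw [han, hbn]; field_simp; try ring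
      have hv' : a (n+1) - b (n+1) = 2 * A := by
        rw [han, hbn]; field_simp; try ring
      have ha6 : a (n+1) - 6 = (2*A^2 - B^2 - 6*A) / A := by
        rw [han]; field_simp; try ring
      have key : 0 ≤ 2*A^2 + B^2 - 18*A := by
        rcases le_or_gt 9 A with h9 | h9
        · nlinarith [sq_nonneg B]
        · -- from invariant, 2B ≤ A - 18
          have h2B : 2*B ≤ A - 18 := by linarith
          nlinarith [mul_nonneg (by linarith : (0:ℝ) ≤ 18 - A - 2*B)
            (by linarith : (0:ℝ) ≤ A - 18 - 2*B), sq_nonneg (A - 6)]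
      refine ⟨?_, ?_, ?_, ?_⟩
      · have hnum : 0 < 2*A^2 - B^2 - 6*A := by nlinarith
        linarith [ha6, div_pos hnum hApos]
      · rw [hu']; positivity
      · rw [hv']; linarith
      · rw [hu', ha6, ← mul_div_assoc, ← mul_div_assoc,
          div_le_div_iff₀ hApos hApos]
        nlinarith
      
  intro ℓ
  obtain ⟨h6, hu, hv, hI⟩ := inv ℓ
  have hP : 0 < (a ℓ + 12) * (a ℓ - 6) * (a ℓ - b ℓ) := by
    apply mul_pos (mul_pos (by linarith) (by linarith)) hv
  rw [hc ℓ, div_lt_iff₀ hP]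
  -- 144(a+b) ≤ 216(a-6) < (a+12)(a-6)(a-b) since (a+12)(a-b) > 216
  nlinarith [mul_pos (show (0:ℝ) < a ℓ - 6 by linarith)
    (show (0:ℝ) < (a ℓ + 12) * (a ℓ - b ℓ) - 216 by nlinarith)]
end

section
/- Let a, b be real numbers with a > 6, b < 0, and a > -b. Define n = -216a + 6a² + a³ - 72b - 6ab - a²b and n' = -216a² + 12a³ + 4a⁴ + 144b² - 6ab² - 4a²b² + b⁴. Then 2(n' - (a/2)·n) = (a + b)·(7a³ + 18a² - 6a²b + 288b + 2b³ - 216a - 12ab - 2ab²) > 0; in particular, if n > 0 then n' > 0. -/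
/-- The induction step for the bound c_{ℓ,D}² < 1/2: for real a > 6,
b < 0, a > -b, with n and n' the numerators of 1/2 - c_{m,D}² and
1/2 - c_{m+1,D}², we have
2(n' - (a/2)n) = (a+b)(7a³ + 18a² - 6a²b + 288b + 2b³ - 216a - 12ab - 2ab²) > 0;
in particular n > 0 implies n' > 0. -/
theorem cD_induction_step (a b n n' : ℝ)
    (ha : 6 < a) (hb : b < 0) (hab : -b < a)
    (hn : n = -216*a + 6*a^2 + a^3 - 72*b - 6*a*b - a^2*b)
    (hn' : n' = -216*a^2 + 12*a^3 + 4*a^4 + 144*b^2 - 6*a*b^2 - 4*a^2*b^2 + b^4) :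
    2 * (n' - (a/2) * n)
      = (a + b) * (7*a^3 + 18*a^2 - 6*a^2*b + 288*b + 2*b^3 - 216*a - 12*a*b - 2*a*b^2) ∧
    0 < (a + b) * (7*a^3 + 18*a^2 - 6*a^2*b + 288*b + 2*b^3 - 216*a - 12*a*b - 2*a*b^2) ∧
    (0 < n → 0 < n') := by
  have hs : 0 < a + b := by linarith
  have hF : 0 < 7*a^3 + 18*a^2 - 6*a^2*b + 288*b + 2*b^3 - 216*a - 12*a*b - 2*a*b^2 := by
    have hb2 : 0 < b^2 := by nlinarith [mul_pos_of_neg_of_neg hb hb]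
    nlinarith [sq_nonneg b, sq_nonneg (a+b), sq_nonneg (a-6), mul_pos hs hb2, sq_nonneg (a*b), mul_pos (by linarith : (0:ℝ) < a - 6) hb2]
  have heq : 2 * (n' - (a/2) * n)
      = (a + b) * (7*a^3 + 18*a^2 - 6*a^2*b + 288*b + 2*b^3 - 216*a - 12*a*b - 2*a*b^2) := by
    subst hn hn'; ring
  refine ⟨heq, mul_pos hs hF, fun hnpos => ?_⟩
  nlinarith [mul_pos hs hF, mul_pos (by linarith : (0:ℝ) < a) hnpos]
end

section
/- Let a, b be real numbers with a > 6 and |b| < a. Define q = -b²/(4a), p = a/2 + q, t = (36a + 72b + a·b²)/(144 - 4a²), s = a/2 + t, and the 4×4 real matrices B = [[p, q, -3/2, 3/2], [q, p, 3/2, -3/2], [-3/2, 3/2, p, q], [3/2, -3/2, q, p]] and S = [[s, t, -3/2, 3/2], [t, s, 3/2, -3/2], [-3/2, 3/2, s, t], [3/2, -3/2, t, s]]. Then a real number λ admits a nonzero vector v ∈ ℝ⁴ with S·v = λ·B·v if and only if λ = 1 or λ = a(a² - ab - 72)/((a² - 36)(a - b)); moreover 1 - a(a² - ab - 72)/((a²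 - 36)(a - b)) = 36(a + b)/((a² - 36)(a - b)). -/
open Matrix

/-!
Both matrices have the form `nedelecBlock x y (3/2)`, and every such matrix is diagonalised by the
same Hadamard matrix, with eigenvalues `x + y` (twice) and `x - y ∓ 3`. Hence the generalized
eigenvalues are the ratios of corresponding eigenvalues. Since `s - t = p - q = a/2`, the two
eigenvalues `x - y ∓ 3` give the ratio `1`, and `x + y` gives `(s + t)/(p + q)`, which simplifies
to the stated value.
-/

section

variable {K n : Type*} [Field K] [Fintype n] [DecidableEq n]

def IsGenEigenvalue (A B : Matrix n n K) (μ : K) : Prop :=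
  ∃ v : n → K, v ≠ 0 ∧ A *ᵥ v = μ • B *ᵥ v

theorem isGenEigenvalue_diagonal_iff (d e : n → K) (μ : K) :
    IsGenEigenvalue (diagonal d) (diagonal e) μ ↔ ∃ i, d i = μ * e i := by
  constructor
  · rintro ⟨w, hw, h⟩
    obtain ⟨i, hi⟩ := Function.ne_iff.mp hw
    refine ⟨i, mul_right_cancel₀ hi ?_⟩
    simpa [mulVec_diagonal, mul_assoc] using congrFun h i
  · rintro ⟨i, hi⟩
    refine ⟨Pi.single i 1, by simp, ?_⟩
    ext j
    by_cases hj : j = i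
    · subst hj; simp [mulVec_diagonal, hi]
    · simp [mulVec_diagonal, hj]

theorem isGenEigenvalue_iff_of_mul_eq_mul_diagonal {A B P : Matrix n n K} {d e : n → K}
    (hP : IsUnit P) (hA : A * P = P * diagonal d) (hB : B * P = P * diagonal e) (μ : K) :
    IsGenEigenvalue A B μ ↔ ∃ i, d i = μ * e i := by
  rw [← isGenEigenvalue_diagonal_iff]
  have hinj := mulVec_injective_iff_isUnit.mpr hP
  have key : ∀ w, A *ᵥ (P *ᵥ w) = μ • B *ᵥ (P *ᵥ w) ↔
      diagonal d *ᵥ w = μ • diagonal e *ᵥ w := fun w => by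
    rw [mulVec_mulVec, mulVec_mulVec, hA, hB, ← mulVec_mulVec, ← mulVec_mulVec, ← mulVec_smul]
    exact hinj.eq_iff
  constructor
  · rintro ⟨v, hv, h⟩
    obtain ⟨w, rfl⟩ := (mulVec_surjective_iff_isUnit.mpr hP) v
    exact ⟨w, fun hw => hv (by simp [hw]), (key w).mp h⟩
  · rintro ⟨w, hw, h⟩
    exact ⟨P *ᵥ w, fun hPw => hw (hinj (by simpa using hPw)), (key w).mpr h⟩

end

section

variable {K : Type*} [Field K]

def nedelecBlock (x y c : K) : Matrix (Fin 4) (Fin 4) K :=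
  !![x, y, -c, c;
     y, x, c, -c;
     -c, c, x, y;
     c, -c, y, x]

def hadamard4 : Matrix (Fin 4) (Fin 4) K :=
  !![1, 1, 1, 1;
     1, 1, -1, -1;
     1, -1, 1, -1;
     1, -1, -1, 1]

theorem isUnit_hadamard4 (h2 : (2 : K) ≠ 0) : IsUnit (hadamard4 : Matrix (Fin 4) (Fin 4) K) := by
  refine IsUnit.of_mul_eq_one ((4 : K)⁻¹ • hadamard4) ?_
  have h4 : (4 : K) ≠ 0 := by
    rw [show (4 : K) = 2 ^ 2 by norm_num]; exact pow_ne_zero 2 h2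
  ext i j
  fin_cases i <;> fin_cases j <;> simp [hadamard4, Matrix.mul_apply, Fin.sum_univ_four, one_apply] <;>
    field_simp <;> norm_num

theorem nedelecBlock_mul_hadamard4 (x y c : K) :
    nedelecBlock x y c * hadamard4 =
      hadamard4 * diagonal ![x + y, x + y, x - y - 2 * c, x - y + 2 * c] := by
  ext i j
  fin_cases i <;> fin_cases j <;>
    simp [nedelecBlock, hadamard4, Matrix.mul_apply, Fin.sum_univ_four] <;> ring

theorem isGenEigenvalue_nedelecBlock_iff (h2 : (2 : K) ≠ 0) {x y x' y' c : K}
    (hdiff : x - y = x' - y') (hc : (x - y) ^ 2 ≠ (2 * c) ^ 2) (hsum : x' + y' ≠ 0) (μ : K) :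
    IsGenEigenvalue (nedelecBlock x y c) (nedelecBlock x' y' c) μ ↔
      μ = 1 ∨ μ = (x + y) / (x' + y') := by
  rw [isGenEigenvalue_iff_of_mul_eq_mul_diagonal (isUnit_hadamard4 h2)
    (nedelecBlock_mul_hadamard4 x y c) (nedelecBlock_mul_hadamard4 x' y' c)]
  obtain ⟨hminus, hplus⟩ : x - y - 2 * c ≠ 0 ∧ x - y + 2 * c ≠ 0 :=
    mul_ne_zero_iff.mp fun h => hc (by linear_combination h)
  have fixed_iff {z : K} (hz : z ≠ 0) : z = μ * z ↔ μ = 1 := by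
    rw [eq_comm, mul_eq_right₀ hz]
  simp only [Fin.exists_fin_succ, Fin.exists_fin_zero, cons_val_zero, cons_val_succ, or_false, ← hdiff,
    fixed_iff hminus, fixed_iff hplus, eq_div_iff hsum, eq_comm (a := x + y)]
  tauto

end

/-- Generalized eigenvalues of the local two-level problem S·v = λ·B·v for
the lowest-order Nedelec discretization: they are exactly λ = 1 and
λ = a(a² - ab - 72)/((a² - 36)(a - b)), and
1 - a(a² - ab - 72)/((a² - 36)(a - b)) = 36(a+b)/((a² - 36)(a - b)). -/
theorem nedelec_gen_eigenvalues (a b p q s t : ℝ)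
    (ha : 6 < a) (hb : |b| < a)
    (hq : q = -(b^2) / (4*a)) (hp : p = a/2 + q)
    (ht : t = (36*a + 72*b + a*b^2) / (144 - 4*a^2)) (hs : s = a/2 + t) :
    (∀ lam : ℝ,
      (∃ v : Fin 4 → ℝ, v ≠ 0 ∧
        (!![s, t, -3/2, 3/2;
            t, s, 3/2, -3/2;
            -3/2, 3/2, s, t;
            3/2, -3/2, t, s] : Matrix (Fin 4) (Fin 4) ℝ).mulVec v
        = lam • (!![p, q, -3/2, 3/2;
                    q, p, 3/2, -3/2;
                    -3/2, 3/2, p, q;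
                    3/2, -3/2, q, p] : Matrix (Fin 4) (Fin 4) ℝ).mulVec v)
      ↔ (lam = 1 ∨ lam = a * (a^2 - a*b - 72) / ((a^2 - 36) * (a - b)))) ∧
    1 - a * (a^2 - a*b - 72) / ((a^2 - 36) * (a - b))
      = 36 * (a + b) / ((a^2 - 36) * (a - b)) := by
  obtain ⟨hb_lower, hb_upper⟩ := abs_lt.mp hb
  have ha36 : a ^ 2 - 36 ≠ 0 := by nlinarith
  have hab : a - b ≠ 0 := by linarith
  have ha0 : a ≠ 0 := by linarith
  have hpq : p + q = (a ^ 2 - b ^ 2) / (2 * a) := by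
    rw [hp, hq]; field_simp; ring
  have hab2 : a ^ 2 - b ^ 2 ≠ 0 := by nlinarith
  have hpq_ne : p + q ≠ 0 := by
    rw [hpq]; exact div_ne_zero hab2 (by linarith)
  have hst : (s + t) / (p + q) = a * (a ^ 2 - a * b - 72) / ((a ^ 2 - 36) * (a - b)) := by
    rw [hpq, hs, ht, show 144 - 4 * a ^ 2 = -4 * (a ^ 2 - 36) by ring]
    field_simp
    ring
  refine ⟨fun lam => ?_, by field_simp; ring⟩
  -- `-3/2` is `(-3)/2`, while `nedelecBlock _ _ (3/2)` has `-(3/2)`.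
  simp only [neg_div]
  rw [← hst]
  exact isGenEigenvalue_nedelecBlock_iff two_ne_zero (by linarith) (by nlinarith) hpq_ne lam
end

section
/- Let a, b be real numbers with a > 6 and |b| < a. Define q = -b²/(8a), p = a/4 + q, t = (-72a - 144b - 6b² - a·b²)/(8(a - 6)(a + 12)), s = a/4 + t, and the 6×6 real matrices B and S with entries: B has diagonal entries p, entries q in positions (1,2),(2,1),(3,4),(4,3),(5,6),(6,5), and entries ±3/4 elsewhere following the sign pattern of the matrix [[p,q,3/4,-3/4,3/4,-3/4],[q,p,-3/4,3/4,-3/4,3/4],[3/4,-3/4,p,q,3/4,-3/4],[-3/4,3/4,q,p,-3/4,3/4],[3/4,-3/4,3/4,-3/4,p,q],[-3/4,3/4,-3/4,3/4,q,p]]; S is the same matrix with p replaced by s and q replaced by t. Then a real number λ admits a nonzero vector v ∈ ℝ⁶ with S·v = λ·B·v if and only if λ = 1 or λ = a(a² - ab + 6a - 6b - 144)/((a + 12)(a - 6)(a - b)); moreover 1 - a(a² - ab + 6a - 6b - 144)/((a + 12)(a - 6)(a - b)) = 72(a + b)/((a + 12)(a - 6)(a - b)). -/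
/-!
Both matrices have the pattern `rtnBlock c x y`, which decouples in the pair sums
`v (2i) + v (2i+1)` and pair differences `v (2i) - v (2i+1)`: on the sums it acts as `(x + y) • 1`,
on the differences as the 3 × 3 matrix `(x - y - 2c) • 1 + 2c • J`, with eigenvalues `x - y - 2c`
(twice) and `x - y + 4c`. Since `s - t = p - q = a / 4`, the pencil `S - λ B` acts on the
differences as `1 - λ` times a matrix that is invertible for `a > 6`, and on the sums as
`s + t - λ (p + q)`. Hence the generalized eigenvalues are `1` and `(s + t) / (p + q)`.
-/

open Matrix

section

variable {K : Type*}

theorem eq_zero_of_circulant_three [Field K] {α β d₀ d₁ d₂ : K}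
    (hsub : α - β ≠ 0) (hadd : α + 2 * β ≠ 0)
    (h₀ : α * d₀ + β * (d₁ + d₂) = 0) (h₁ : α * d₁ + β * (d₀ + d₂) = 0)
    (h₂ : α * d₂ + β * (d₀ + d₁) = 0) : d₀ = 0 ∧ d₁ = 0 ∧ d₂ = 0 := by
  have hsum : d₀ + d₁ + d₂ = 0 := by
    refine (mul_eq_zero.mp ?_).resolve_left hadd
    linear_combination h₀ + h₁ + h₂
  refine ⟨?_, ?_, ?_⟩ <;> refine (mul_eq_zero.mp ?_).resolve_left hsub
  · linear_combination h₀ - β * hsum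
  · linear_combination h₁ - β * hsum
  · linear_combination h₂ - β * hsum

theorem eq_zero_of_add_eq_zero_of_sub_eq_zero [Field K] [NeZero (2 : K)] {a b : K}
    (hadd : a + b = 0) (hsub : a - b = 0) : a = 0 ∧ b = 0 := by
  constructor <;> refine (mul_eq_zero.mp ?_).resolve_left (two_ne_zero (α := K))
  · linear_combination hadd + hsub
  · linear_combination hadd - hsub

theorem Matrix.mulVec_eq_smul_mulVec_iff {n R : Type*} [Fintype n] [CommRing R]
    {A B : Matrix n n R} {lam : R} {v : n → R} :
    A *ᵥ v = lam • (B *ᵥ v) ↔ (A - lam • B) *ᵥ v = 0 := by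
  rw [sub_mulVec, smul_mulVec, sub_eq_zero]

def rtnBlock [Neg K] (c x y : K) : Matrix (Fin 6) (Fin 6) K :=
  !![x, y, c, -c, c, -c;
     y, x, -c, c, -c, c;
     c, -c, x, y, c, -c;
     -c, c, y, x, -c, c;
     c, -c, c, -c, x, y;
     -c, c, -c, c, y, x]

theorem rtnBlock_sub_smul [CommRing K] (c x y x' y' lam : K) :
    rtnBlock c x y - lam • rtnBlock c x' y' =
      rtnBlock ((1 - lam) * c) (x - lam * x') (y - lam * y') := by
  ext i j
  fin_cases i <;> fin_cases j <;> simp [rtnBlock] <;> ring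

theorem rtnBlock_mulVec [CommRing K] (c x y : K) (v : Fin 6 → K) :
    rtnBlock c x y *ᵥ v =
      ![x * v 0 + y * v 1 + c * (v 2 - v 3) + c * (v 4 - v 5),
        y * v 0 + x * v 1 - c * (v 2 - v 3) - c * (v 4 - v 5),
        c * (v 0 - v 1) + x * v 2 + y * v 3 + c * (v 4 - v 5),
        -c * (v 0 - v 1) + y * v 2 + x * v 3 - c * (v 4 - v 5),
        c * (v 0 - v 1) + c * (v 2 - v 3) + x * v 4 + y * v 5,
        -c * (v 0 - v 1) - c * (v 2 - v 3) + y * v 4 + x * v 5] := by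
  funext i
  fin_cases i <;> simp [rtnBlock, mulVec, dotProduct, Fin.sum_univ_succ] <;> ring

theorem rtnBlock_mulVec_ones [CommRing K] (c x y : K) :
    rtnBlock c x y *ᵥ ![1, 1, 1, 1, 1, 1] = (x + y) • ![1, 1, 1, 1, 1, 1] := by
  funext i
  fin_cases i <;> simp [rtnBlock_mulVec] <;> ring

theorem rtnBlock_mulVec_pairDiff [CommRing K] (c x y : K) :
    rtnBlock c x y *ᵥ ![1, -1, -1, 1, 0, 0] = (x - y - 2 * c) • ![1, -1, -1, 1, 0, 0] := by
  funext i
  fin_cases i <;> simp [rtnBlock_mulVec] <;> ring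

theorem rtnBlock_mulVec_alternating [CommRing K] (c x y : K) :
    rtnBlock c x y *ᵥ ![1, -1, 1, -1, 1, -1] = (x - y + 4 * c) • ![1, -1, 1, -1, 1, -1] := by
  funext i
  fin_cases i <;> simp [rtnBlock_mulVec] <;> ring

theorem rtnBlock_mulVec_eq_zero [Field K] [NeZero (2 : K)] {c x y : K} {v : Fin 6 → K}
    (h : (x + y) * (x - y - 2 * c) * (x - y + 4 * c) ≠ 0) (hv : rtnBlock c x y *ᵥ v = 0) :
    v = 0 := by
  simp only [mul_ne_zero_iff] at h
  obtain ⟨⟨hsum, hsub⟩, hadd⟩ := h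
  rw [rtnBlock_mulVec] at hv
  have e₀ := congrFun hv 0; have e₁ := congrFun hv 1; have e₂ := congrFun hv 2
  have e₃ := congrFun hv 3; have e₄ := congrFun hv 4; have e₅ := congrFun hv 5
  simp only [Pi.zero_apply, cons_val_zero, cons_val_one, cons_val] at e₀ e₁ e₂ e₃ e₄ e₅
  obtain ⟨d₀, d₁, d₂⟩ := eq_zero_of_circulant_three (α := x - y) (β := 2 * c)
    (d₀ := v 0 - v 1) (d₁ := v 2 - v 3) (d₂ := v 4 - v 5) hsub
    (by rwa [show x - y + 2 * (2 * c) = x - y + 4 * c by ring])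
    (by linear_combination e₀ - e₁) (by linear_combination e₂ - e₃) (by linear_combination e₄ - e₅)
  have pair {i j : Fin 6} (h : (x + y) * (v i + v j) = 0) (hd : v i - v j = 0) :
      v i = 0 ∧ v j = 0 :=
    eq_zero_of_add_eq_zero_of_sub_eq_zero ((mul_eq_zero.mp h).resolve_left hsum) hd
  obtain ⟨v₀, v₁⟩ := pair (by linear_combination e₀ + e₁) d₀
  obtain ⟨v₂, v₃⟩ := pair (by linear_combination e₂ + e₃) d₁
  obtain ⟨v₄, v₅⟩ := pair (by linear_combination e₄ + e₅) d₂
  funext i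
  fin_cases i <;> assumption

theorem exists_rtnBlock_mulVec_eq_zero_iff [Field K] [NeZero (2 : K)] {c x y : K} :
    (∃ v ≠ 0, rtnBlock c x y *ᵥ v = 0) ↔ (x + y) * (x - y - 2 * c) * (x - y + 4 * c) = 0 := by
  refine ⟨fun ⟨v, hv, h⟩ => by_contra fun hne => hv (rtnBlock_mulVec_eq_zero hne h), fun h => ?_⟩
  have of_eigenvector {w : Fin 6 → K} {μ : K} (hw : w 0 = 1)
      (hM : rtnBlock c x y *ᵥ w = μ • w) (hμ : μ = 0) : ∃ v ≠ 0, rtnBlock c x y *ᵥ v = 0 :=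
    ⟨w, fun h0 => one_ne_zero (hw ▸ congrFun h0 0), by rw [hM, hμ, zero_smul]⟩
  obtain (h | h) | h := mul_eq_zero.mp h |>.imp_left mul_eq_zero.mp
  · exact of_eigenvector rfl (rtnBlock_mulVec_ones c x y) h
  · exact of_eigenvector rfl (rtnBlock_mulVec_pairDiff c x y) h
  · exact of_eigenvector rfl (rtnBlock_mulVec_alternating c x y) h

theorem exists_rtnBlock_mulVec_eq_smul_iff [Field K] [NeZero (2 : K)] {c x y x' y' lam : K}
    (hxy : x - y = x' - y') (h₂ : x' - y' - 2 * c ≠ 0) (h₄ : x' - y' + 4 * c ≠ 0) :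
    (∃ v ≠ 0, rtnBlock c x y *ᵥ v = lam • (rtnBlock c x' y' *ᵥ v)) ↔
      lam = 1 ∨ x + y = lam * (x' + y') := by
  simp_rw [Matrix.mulVec_eq_smul_mulVec_iff, rtnBlock_sub_smul, exists_rtnBlock_mulVec_eq_zero_iff]
  calc _ ↔ (x + y - lam * (x' + y')) * (1 - lam) ^ 2 *
        ((x' - y' - 2 * c) * (x' - y' + 4 * c)) = 0 := by
        rw [show x = x' - y' + y by linear_combination hxy]
        ring_nf
    _ ↔ lam = 1 ∨ x + y = lam * (x' + y') := by
        simp [h₂, h₄, sub_eq_zero, or_comm, eq_comm (a := lam)]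

end

/-- Generalized eigenvalues of the local two-level problem S·v = λ·B·v for
the lowest-order Raviart-Thomas-Nedelec discretization: they are exactly
λ = 1 and λ = a(a² - ab + 6a - 6b - 144)/((a+12)(a-6)(a-b)), and
1 - a(a² - ab + 6a - 6b - 144)/((a+12)(a-6)(a-b))
  = 72(a+b)/((a+12)(a-6)(a-b)). -/
theorem rtn_gen_eigenvalues (a b p q s t : ℝ)
    (ha : 6 < a) (hb : |b| < a)
    (hq : q = -(b^2) / (8*a)) (hp : p = a/4 + q)
    (ht : t = (-72*a - 144*b - 6*b^2 - a*b^2) / (8 * (a - 6) * (a + 12)))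
    (hs : s = a/4 + t) :
    (∀ lam : ℝ,
      (∃ v : Fin 6 → ℝ, v ≠ 0 ∧
        (!![s, t, 3/4, -3/4, 3/4, -3/4;
            t, s, -3/4, 3/4, -3/4, 3/4;
            3/4, -3/4, s, t, 3/4, -3/4;
            -3/4, 3/4, t, s, -3/4, 3/4;
            3/4, -3/4, 3/4, -3/4, s, t;
            -3/4, 3/4, -3/4, 3/4, t, s] : Matrix (Fin 6) (Fin 6) ℝ).mulVec v
        = lam • (!![p, q, 3/4, -3/4, 3/4, -3/4;
                    q, p, -3/4, 3/4, -3/4, 3/4;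
                    3/4, -3/4, p, q, 3/4, -3/4;
                    -3/4, 3/4, q, p, -3/4, 3/4;
                    3/4, -3/4, 3/4, -3/4, p, q;
                    -3/4, 3/4, -3/4, 3/4, q, p] : Matrix (Fin 6) (Fin 6) ℝ).mulVec v)
      ↔ (lam = 1 ∨
          lam = a * (a^2 - a*b + 6*a - 6*b - 144) / ((a + 12) * (a - 6) * (a - b)))) ∧
    1 - a * (a^2 - a*b + 6*a - 6*b - 144) / ((a + 12) * (a - 6) * (a - b))
      = 72 * (a + b) / ((a + 12) * (a - 6) * (a - b)) := by
  obtain ⟨hb₁, hb₂⟩ := abs_lt.mp hb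
  have hpq : 0 < p + q := by
    have hpq_eq : p + q = (a ^ 2 - b ^ 2) / (4 * a) := by rw [hp, hq]; field_simp; ring
    rw [hpq_eq]
    exact div_pos (by nlinarith) (by linarith)
  have hst : s + t =
      a * (a^2 - a*b + 6*a - 6*b - 144) / ((a + 12) * (a - 6) * (a - b)) * (p + q) := by
    rw [hp, hq, hs, ht]
    field_simp [show a - 6 ≠ 0 by linarith, show a - b ≠ 0 by linarith]
    ring
  refine ⟨fun lam => ?_, by field_simp [show a - 6 ≠ 0 by linarith]; ring⟩
  -- `-3/4` is `(-3)/4`, not the `-(3/4)` of `rtnBlock (3/4)`.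
  simp only [neg_div]
  rw [← rtnBlock.eq_1 (3/4) s t, ← rtnBlock.eq_1 (3/4) p q,
    exists_rtnBlock_mulVec_eq_smul_iff (by rw [hs, hp]; ring) (by rw [hp]; linarith)
      (by rw [hp]; linarith),
    hst, mul_left_inj' hpq.ne', eq_comm (a := lam) (b := _ / _)]
end

section
/- Let γ, b be real numbers with 0 < γ < 1 and b ≥ 0. Set s = √(1 - γ² + b + b²), α = (3 - 4γ²)/(1 + 2b + √(3 - 4γ² + (1 + 2b)²)), a = (1 + α)/(1 - α), and c = 1/(1 + T₂(a)) where T₂(x) = 2x² - 1. Then α = 2s - 2b - 1, s > b, 1 - α ≠ 0, and the polynomial coefficients simplify as 8ac/(1 - α) = 2/(s - b) and -8c/(1 - α)² = -1/(s - b)². -/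
/-! Completing the square, `3 - 4γ² + (1 + 2b)² = (2s)²`, so the denominator of `α` is the
conjugate of `2s - (1 + 2b)` and `α = 2s - 2b - 1`, i.e. `1 + α = 2(s - b)`. Since
`c = 1/(2a²)` with `a = (1 + α)/(1 - α)`, both coefficients depend on `α` only through
`1 + α`: they are `4/(1 + α)` and `-4/(1 + α)²`. -/

namespace Real

theorem div_add_sqrt_eq_sqrt_sub {x y : ℝ} (hxy : 0 ≤ x + y ^ 2)
    (hne : y + √(x + y ^ 2) ≠ 0) : x / (y + √(x + y ^ 2)) = √(x + y ^ 2) - y := by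
  rw [div_eq_iff hne]
  linear_combination -sq_sqrt hxy

end Real

section Chebyshev

variable {α a c : ℝ}

theorem chebyshev_stab_const_eq (ha : a = (1 + α) / (1 - α))
    (hc : c = 1 / (1 + (2 * a ^ 2 - 1))) : c = (1 - α) ^ 2 / (2 * (1 + α) ^ 2) := by
  rw [hc, ha, add_sub_cancel, div_pow, ← mul_div_assoc, one_div_div]

theorem chebyshev_stab_coeff_zero (h1 : 1 - α ≠ 0)
    (ha : a = (1 + α) / (1 - α)) (hc : c = 1 / (1 + (2 * a ^ 2 - 1))) :
    8 * a * c / (1 - α) = 4 / (1 + α) := by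
  rw [chebyshev_stab_const_eq ha hc, ha]
  field_simp
  ring

theorem chebyshev_stab_coeff_one (h1 : 1 - α ≠ 0) (ha : a = (1 + α) / (1 - α))
    (hc : c = 1 / (1 + (2 * a ^ 2 - 1))) :
    -8 * c / (1 - α) ^ 2 = -4 / (1 + α) ^ 2 := by
  rw [chebyshev_stab_const_eq ha hc]
  field_simp
  ring

end Chebyshev

/-- Simplification of the coefficients of the degree-one AMLI stabilization
polynomial built from the Chebyshev polynomial T₂(x) = 2x² - 1: with
s = √(1 - γ² + b + b²), α = (3 - 4γ²)/(1 + 2b + √(3 - 4γ² + (1+2b)²)),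
a = (1+α)/(1-α), c = 1/(1 + T₂(a)), we have α = 2s - 2b - 1, s > b,
1 - α ≠ 0, 8ac/(1-α) = 2/(s-b) and -8c/(1-α)² = -1/(s-b)². -/
theorem amli_poly_coeffs (γ b s α a c : ℝ)
    (hγ0 : 0 < γ) (hγ1 : γ < 1) (hb : 0 ≤ b)
    (hs : s = Real.sqrt (1 - γ^2 + b + b^2))
    (hα : α = (3 - 4*γ^2) / (1 + 2*b + Real.sqrt (3 - 4*γ^2 + (1 + 2*b)^2)))
    (ha : a = (1 + α) / (1 - α))
    (hc : c = 1 / (1 + (2*a^2 - 1))) :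
    α = 2*s - 2*b - 1 ∧ b < s ∧ 1 - α ≠ 0 ∧
    8*a*c / (1 - α) = 2 / (s - b) ∧
    -8*c / (1 - α)^2 = -1 / (s - b)^2 := by
  have hu : 0 < 1 - γ ^ 2 + b + b ^ 2 := by nlinarith
  have hs0 : 0 ≤ s := hs ▸ Real.sqrt_nonneg _
  have hsq : 3 - 4 * γ ^ 2 + (1 + 2 * b) ^ 2 = (2 * s) ^ 2 := by
    rw [hs, mul_pow, Real.sq_sqrt hu.le]; ring
  have hsqrt : √(3 - 4 * γ ^ 2 + (1 + 2 * b) ^ 2) = 2 * s := by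
    rw [hsq, Real.sqrt_sq (by linarith)]
  have hα' : α = 2 * s - 2 * b - 1 := by
    rw [hα, Real.div_add_sqrt_eq_sqrt_sub (hsq ▸ sq_nonneg _) (by rw [hsqrt]; positivity), hsqrt]
    ring
  have hbs : b < s := hs ▸ (Real.lt_sqrt hb).2 (by nlinarith)
  have hs1 : s < 1 + b := hs ▸ (Real.sqrt_lt' (by linarith)).2 (by nlinarith)
  have h1 : 1 - α ≠ 0 := by rw [hα']; linarith
  have h2 : 1 + α = 2 * (s - b) := by rw [hα']; ring
  refine ⟨hα', hbs, h1, ?_, ?_⟩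
  · rw [chebyshev_stab_coeff_zero h1 ha hc, h2, div_mul_eq_div_div]
    norm_num
  · rw [chebyshev_stab_coeff_one h1 ha hc, h2, mul_pow, div_mul_eq_div_div]
    norm_num
end
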